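/- arXiv:1312.4088 — 3 statements merged into one kernel-verified Lean document; each statement's English description precedes it below -/
import Mathlib

section
/- Define J(0) = 0 and J(l) = inf{n > J(l-1) : V_{n+1} > n(μ-ε)} for i.i.d. nonnegative random variables V_n with E[V_1] < ∞, and let γ = inf{l ≥ 1 : J(l) = ∞}. Then γ is stochastically dominated by a geometric random variable with success probability exp(-c E[V_1]/(μ-ε)) for some constant c > 0; in particular E[γ] ≤ exp(c E[V_1]/(μ-ε)) < ∞. -/
open MeasureTheory ProbabilityTheory Filter Set
open scoped ENNReal NNReal Topology

/-!
The events `V (n + 1) > n (μ - ε)` are independent, the record times `J l` are their successive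
occurrences, and `γ > k` forces at least `k` of them. Splitting at the first occurrence after a time
`j`, which is independent of the later events, gives `P(at least k occurrences after j) ≤ q ^ k`,
where `q` bounds the probability of any occurrence after `j`. The probability of no occurrence
after `j` is `∏ (1 - p n) ≥ exp (-c ∑ p n)`, and the layer-cake bound
`∑_{n ≥ 1} P(V 1 > n (μ - ε)) ≤ E (V 1) / (μ - ε)` allows `1 - q = exp (-c E (V 1) / (μ - ε))`.
Since `log (1 - x) ≥ -x / (1 - x)`, one can take `c = 1 / (1 - p 1)`.
-/

lemma Real.exp_neg_inv_one_sub_mul_le_one_sub {p x : ℝ} (hx : 0 ≤ x) (hxp : x ≤ p) (hp : p < 1) :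
    Real.exp (-((1 - p)⁻¹ * x)) ≤ 1 - x := by
  have h1x : 0 < 1 - x := by linarith
  calc Real.exp (-((1 - p)⁻¹ * x)) ≤ Real.exp (Real.log (1 - x)) := by
        gcongr
        calc -((1 - p)⁻¹ * x) ≤ -((1 - x)⁻¹ * x) := by gcongr
          _ = 1 - (1 - x)⁻¹ := by field_simp; ring
          _ ≤ Real.log (1 - x) := Real.one_sub_inv_le_log_of_pos h1x
    _ = 1 - x := Real.exp_log h1x

lemma ENNReal.tsum_ite_natCast_add_one_lt_le_ofReal (x : ℝ) :
    ∑' n : ℕ, (if (n + 1 : ℝ) < x then (1 : ℝ≥0∞) else 0) ≤ ENNReal.ofReal x := by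
  have hvanish : ∀ n ∉ Finset.range ⌊x⌋₊, (if (n + 1 : ℝ) < x then (1 : ℝ≥0∞) else 0) = 0 :=
    fun n hn => if_neg fun hlt => hn <| Finset.mem_range.2 <|
      Nat.lt_of_succ_le <| Nat.le_floor <| by push_cast; exact hlt.le
  rw [tsum_eq_sum hvanish]
  calc ∑ n ∈ Finset.range ⌊x⌋₊, (if (n + 1 : ℝ) < x then (1 : ℝ≥0∞) else 0)
      ≤ ∑ _n ∈ Finset.range ⌊x⌋₊, (1 : ℝ≥0∞) := Finset.sum_le_sum fun n _ => by split_ifs <;> simp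
    _ ≤ ENNReal.ofReal x := by
      rcases le_or_gt 0 x with hx | hx
      · simpa [← ENNReal.ofReal_natCast] using ENNReal.ofReal_le_ofReal (Nat.floor_le hx)
      · simp [Nat.floor_of_nonpos hx.le]

lemma tsum_measure_natCast_add_one_lt_le_lintegral {Ω : Type*} [MeasurableSpace Ω]
    (μ : Measure Ω) {X : Ω → ℝ} (hX : Measurable X) :
    ∑' n : ℕ, μ {ω | (n + 1 : ℝ) < X ω} ≤ ∫⁻ ω, ENNReal.ofReal (X ω) ∂μ := by
  have hmeas (n : ℕ) : MeasurableSet {ω | (n + 1 : ℝ) < X ω} := measurableSet_lt measurable_const hX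
  calc ∑' n : ℕ, μ {ω | (n + 1 : ℝ) < X ω}
      = ∫⁻ ω, ∑' n : ℕ, {ω | (n + 1 : ℝ) < X ω}.indicator 1 ω ∂μ := by
        rw [lintegral_tsum fun n => (measurable_one.indicator (hmeas n)).aemeasurable]
        simp_rw [lintegral_indicator_one (hmeas _)]
    _ ≤ ∫⁻ ω, ENNReal.ofReal (X ω) ∂μ := lintegral_mono fun ω => by
        simpa [Set.indicator_apply] using ENNReal.tsum_ite_natCast_add_one_lt_le_ofReal (X ω)

lemma sum_measureReal_lt_le_integral_div {Ω : Type*} [MeasurableSpace Ω] {μ : Measure Ω}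
    [IsFiniteMeasure μ] {X : Ω → ℝ} (hX : Measurable X) (hXi : Integrable X μ) (hX0 : 0 ≤ X)
    {a : ℝ} (ha : 0 < a) (s : Finset ℕ) :
    ∑ n ∈ s, μ.real {ω | (n + 1 : ℝ) * a < X ω} ≤ (∫ ω, X ω ∂μ) / a := by
  have hset (n : ℕ) : {ω | (n + 1 : ℝ) * a < X ω} = {ω | (n + 1 : ℝ) < X ω / a} := by
    ext ω; simp [lt_div_iff₀ ha]
  have htsum : ∑' n : ℕ, μ {ω | (n + 1 : ℝ) * a < X ω} ≤ ENNReal.ofReal ((∫ ω, X ω ∂μ) / a) := by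
    simp_rw [hset, ← integral_div]
    rw [ofReal_integral_eq_lintegral_ofReal (hXi.div_const a)
      (Eventually.of_forall fun ω => div_nonneg (hX0 ω) ha.le)]
    exact tsum_measure_natCast_add_one_lt_le_lintegral μ (hX.div_const a)
  rw [← ENNReal.toReal_ofReal (div_nonneg (integral_nonneg hX0) ha.le)]
  simp_rw [measureReal_def, ← ENNReal.toReal_sum fun n _ => measure_ne_top μ _]
  exact ENNReal.toReal_mono ENNReal.ofReal_ne_top ((ENNReal.sum_le_tsum s).trans htsum)

namespace ProbabilityTheory

lemma iIndepFun.iIndepSet_preimage {Ω ι : Type*} {β : ι → Type*} [MeasurableSpace Ω]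
    {μ : Measure Ω} [∀ i, MeasurableSpace (β i)] {f : ∀ i, Ω → β i} (hf : iIndepFun f μ)
    (hfm : ∀ i, Measurable (f i)) {t : ∀ i, Set (β i)} (ht : ∀ i, MeasurableSet (t i)) :
    iIndepSet (fun i => f i ⁻¹' t i) μ :=
  ((iIndepFun_iff_iIndep _ _ _).1 hf).iIndepSets'.iIndepSet_of_mem
    (fun i => comap_measurable (f i) (ht i)) fun i => hfm i (ht i)

variable {Ω ι : Type*} [MeasurableSpace Ω] {μ : Measure Ω} {A : ι → Set Ω}

lemma iIndepSet.exp_neg_mul_sum_le_measureReal_biInter_compl (hA : iIndepSet A μ)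
    (hAm : ∀ i, MeasurableSet (A i)) {c : ℝ}
    (hc : ∀ i, Real.exp (-(c * μ.real (A i))) ≤ 1 - μ.real (A i)) (s : Finset ι) :
    Real.exp (-(c * ∑ i ∈ s, μ.real (A i))) ≤ μ.real (⋂ i ∈ s, (A i)ᶜ) := by
  have := hA.isProbabilityMeasure
  have hprod : μ (⋂ i ∈ s, (A i)ᶜ) = ∏ i ∈ s, μ (A i)ᶜ :=
    (iIndepSet_iff _ _).1 hA s fun i _ =>
      (MeasurableSpace.measurableSet_generateFrom (mem_singleton _)).compl
  rw [measureReal_def, hprod, ENNReal.toReal_prod, Finset.mul_sum, ← Finset.sum_neg_distrib,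
    Real.exp_sum]
  gcongr with i
  rw [← measureReal_def, probReal_compl_eq_one_sub (hAm i)]
  exact hc i

lemma iIndepSet.measure_iUnion_le [Countable ι] (hA : iIndepSet A μ)
    (hAm : ∀ i, MeasurableSet (A i)) {c S : ℝ} (hc0 : 0 ≤ c)
    (hc : ∀ i, Real.exp (-(c * μ.real (A i))) ≤ 1 - μ.real (A i))
    (hS : ∀ s : Finset ι, ∑ i ∈ s, μ.real (A i) ≤ S) :
    μ (⋃ i, A i) ≤ ENNReal.ofReal (1 - Real.exp (-(c * S))) := by
  have := hA.isProbabilityMeasure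
  have hdir : Directed (· ⊆ ·) fun s : Finset ι => ⋃ i ∈ s, A i :=
    Monotone.directed_le fun s t hst => biUnion_subset_biUnion_left hst
  rw [iUnion_eq_iUnion_finset, hdir.measure_iUnion]
  refine iSup_le fun s => ?_
  rw [← ofReal_measureReal (measure_ne_top _ _), ← compl_compl (⋃ i ∈ s, A i),
    probReal_compl_eq_one_sub (Finset.measurableSet_biUnion s fun i _ => hAm i).compl,
    compl_iUnion₂]
  gcongr
  calc Real.exp (-(c * S)) ≤ Real.exp (-(c * ∑ i ∈ s, μ.real (A i))) := by gcongr; exact hS s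
    _ ≤ μ.real (⋂ i ∈ s, (A i)ᶜ) := hA.exp_neg_mul_sum_le_measureReal_biInter_compl hAm hc s

end ProbabilityTheory

section Occurrences

variable {Ω : Type*} {A : ℕ → Set Ω}

def occursAtLeast (A : ℕ → Set Ω) (k j : ℕ) : Set Ω :=
  ⋃ (s : Finset ℕ) (_ : k ≤ s.card) (_ : ∀ i ∈ s, j < i), ⋂ i ∈ s, A i

lemma mem_occursAtLeast {k j : ℕ} {ω : Ω} :
    ω ∈ occursAtLeast A k j ↔ ∃ s : Finset ℕ, k ≤ s.card ∧ ∀ i ∈ s, j < i ∧ ω ∈ A i := by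
  simp only [occursAtLeast, mem_iUnion, mem_iInter, exists_prop, ← forall_and]

lemma measurableSet_occursAtLeast {m : MeasurableSpace Ω} {k j : ℕ}
    (hA : ∀ i, j < i → MeasurableSet[m] (A i)) : MeasurableSet[m] (occursAtLeast A k j) :=
  .iUnion fun s => .iUnion fun _ => .iUnion fun hs =>
    .biInter s.countable_toSet fun i hi => hA i (hs i hi)

lemma occursAtLeast_succ (k j : ℕ) :
    occursAtLeast A (k + 1) j =
      ⋃ m, disjointed (fun m => A (j + 1 + m)) m ∩ occursAtLeast A k (j + 1 + m) := by
  classical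
  ext ω
  simp only [mem_iUnion, mem_inter_iff, mem_occursAtLeast, disjointed_eq_inter_compl, mem_iInter,
    mem_compl_iff]
  constructor
  · rintro ⟨s, hcard, hs⟩
    have hex : ∃ m, ω ∈ A (j + 1 + m) := by
      obtain ⟨i, hi⟩ := Finset.card_pos.1 (by omega : 0 < s.card)
      exact ⟨i - (j + 1), by rw [Nat.add_sub_cancel' (hs i hi).1]; exact (hs i hi).2⟩
    refine ⟨Nat.find hex, ⟨Nat.find_spec hex, fun i hi => Nat.find_min hex hi⟩,
      s.erase (j + 1 + Nat.find hex), ?_, fun i hi => ?_⟩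
    · have := Finset.pred_card_le_card_erase (s := s) (a := j + 1 + Nat.find hex)
      omega
    · obtain ⟨hne, his⟩ := Finset.mem_erase.1 hi
      obtain ⟨hji, hωi⟩ := hs i his
      have : Nat.find hex ≤ i - (j + 1) := Nat.find_min' hex (by rwa [Nat.add_sub_cancel' hji])
      exact ⟨by omega, hωi⟩
  · rintro ⟨m, ⟨hωm, -⟩, s, hcard, hs⟩
    refine ⟨insert (j + 1 + m) s, ?_, fun i hi => ?_⟩
    · rw [Finset.card_insert_of_notMem fun h => lt_irrefl _ (hs _ h).1]
      omega
    · rcases Finset.mem_insert.1 hi with rfl | hi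
      · exact ⟨by omega, hωm⟩
      · exact ⟨by have := (hs i hi).1; omega, (hs i hi).2⟩

lemma ProbabilityTheory.iIndepSet.measure_occursAtLeast_le_pow [MeasurableSpace Ω]
    {μ : Measure Ω} (hA : iIndepSet A μ) (hAm : ∀ i, MeasurableSet (A i)) {q : ℝ≥0∞}
    (hq : ∀ j, μ (⋃ m, A (j + 1 + m)) ≤ q) (k j : ℕ) : μ (occursAtLeast A k j) ≤ q ^ k := by
  induction k generalizing j with
  | zero => have := hA.isProbabilityMeasure; simpa using prob_le_one
  | succ k ih =>
    set D := disjointed fun m => A (j + 1 + m) with hD_def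
    have hD (m : ℕ) : MeasurableSet (D m) := .disjointed (fun m => hAm _) m
    have hDocc (m : ℕ) : μ (D m ∩ occursAtLeast A k (j + 1 + m)) =
        μ (D m) * μ (occursAtLeast A k (j + 1 + m)) := by
      have hgen {S : Set ℕ} {i : ℕ} (hi : i ∈ S) :
          MeasurableSet[MeasurableSpace.generateFrom {t | ∃ n ∈ S, A n = t}] (A i) :=
        MeasurableSpace.measurableSet_generateFrom ⟨i, hi, rfl⟩
      refine (Indep_iff _ _ _).1 (hA.indep_generateFrom_of_disjoint hAm (Iic (j + 1 + m))
        (Ioi (j + 1 + m)) (Iic_disjoint_Ioi le_rfl)) _ _ ?_ ?_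
      · rw [hD_def, disjointed_eq_inter_compl]
        exact (hgen (mem_Iic.2 le_rfl)).inter <| .iInter fun i => .iInter fun hi =>
          (hgen (mem_Iic.2 (by omega))).compl
      · exact measurableSet_occursAtLeast fun i hi => hgen hi
    calc μ (occursAtLeast A (k + 1) j)
        = ∑' m, μ (D m) * μ (occursAtLeast A k (j + 1 + m)) := by
          rw [occursAtLeast_succ, measure_iUnion
            (fun m n hmn => (disjoint_disjointed _ hmn).mono inter_subset_left inter_subset_left)
            fun m => (hD m).inter (measurableSet_occursAtLeast fun i _ => hAm i)]
          exact tsum_congr hDocc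
      _ ≤ ∑' m, μ (D m) * q ^ k := ENNReal.tsum_le_tsum fun m => by gcongr; exact ih _
      _ = μ (⋃ m, A (j + 1 + m)) * q ^ k := by
          rw [ENNReal.tsum_mul_right, ← measure_iUnion (disjoint_disjointed _) hD,
            iUnion_disjointed]
      _ ≤ q ^ (k + 1) := by rw [pow_succ']; gcongr; exact hq j

end Occurrences

section Records

variable {P : ℕ → Prop} {J : ℕ → ℕ∞}

lemma exists_finset_card_eq_of_ne_top
    (hJ : ∀ l, J (l + 1) = sInf {x : ℕ∞ | ∃ n : ℕ, x = n ∧ J l < n ∧ P n}) (l : ℕ)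
    (hl : J l ≠ ⊤) : ∃ s : Finset ℕ, s.card = l ∧ ∀ i ∈ s, 0 < i ∧ P i ∧ (i : ℕ∞) ≤ J l := by
  induction l with
  | zero => exact ⟨∅, by simp⟩
  | succ l ih =>
    obtain ⟨n, hJn, hlt, hPn⟩ : ∃ n : ℕ, J (l + 1) = n ∧ J l < n ∧ P n := by
      rw [hJ] at hl ⊢
      have hne : {x : ℕ∞ | ∃ n : ℕ, x = n ∧ J l < n ∧ P n}.Nonempty :=
        nonempty_iff_ne_empty.2 fun h => hl (by rw [h, sInf_empty])
      obtain ⟨n, hn, hlt, hP⟩ := csInf_mem hne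
      exact ⟨n, hn, hlt, hP⟩
    obtain ⟨s, hcard, hs⟩ := ih (ne_top_of_lt hlt)
    refine ⟨insert n s, ?_, fun i hi => ?_⟩
    · rw [Finset.card_insert_of_notMem fun hn => (hs n hn).2.2.not_gt hlt, hcard]
    · rcases Finset.mem_insert.1 hi with rfl | hi
      · exact ⟨by exact_mod_cast pos_of_gt hlt, hPn, hJn.ge⟩
      · obtain ⟨hi0, hPi, hle⟩ := hs i hi
        exact ⟨hi0, hPi, hle.trans (hJn ▸ hlt.le)⟩

lemma exists_finset_of_lt_sInf (h0 : J 0 = 0)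
    (hJ : ∀ l, J (l + 1) = sInf {x : ℕ∞ | ∃ n : ℕ, x = n ∧ J l < n ∧ P n}) {k : ℕ}
    (hk : (k : ℕ∞) < sInf {x : ℕ∞ | ∃ l : ℕ, x = l ∧ 1 ≤ l ∧ J l = ⊤}) :
    ∃ s : Finset ℕ, k ≤ s.card ∧ ∀ i ∈ s, 0 < i ∧ P i := by
  have hJk : J k ≠ ⊤ := fun htop => by
    rcases Nat.eq_zero_or_pos k with rfl | hkpos
    · simp [h0] at htop
    · exact (sInf_le (by exact ⟨k, rfl, hkpos, htop⟩)).not_gt hk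
  obtain ⟨s, hcard, hs⟩ := exists_finset_card_eq_of_ne_top hJ k hJk
  exact ⟨s, hcard.ge, fun i hi => ⟨(hs i hi).1, (hs i hi).2.1⟩⟩

end Records

lemma ENat.toENNReal_le_tsum {n : ℕ∞} {f : ℕ → ℝ≥0∞} (hf : ∀ k : ℕ, (k : ℕ∞) < n → 1 ≤ f k) :
    (n : ℝ≥0∞) ≤ ∑' k, f k := by
  induction n using ENat.recTopCoe with
  | top =>
    rw [ENat.toENNReal_top, top_le_iff, ← top_le_iff,
      ← ENNReal.tsum_const_eq_top_of_ne_zero (α := ℕ) one_ne_zero]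
    exact ENNReal.tsum_le_tsum fun k => hf k (ENat.natCast_lt_top k)
  | coe m =>
    calc ((m : ℕ∞) : ℝ≥0∞) = ∑ _k ∈ Finset.range m, (1 : ℝ≥0∞) := by simp
      _ ≤ ∑ k ∈ Finset.range m, f k :=
          Finset.sum_le_sum fun k hk => hf k (by exact_mod_cast Finset.mem_range.1 hk)
      _ ≤ ∑' k, f k := ENNReal.sum_le_tsum _

lemma MeasureTheory.lintegral_toENNReal_le_tsum_measure {Ω : Type*} [MeasurableSpace Ω]
    {μ : Measure Ω} {X : Ω → ℕ∞} {E : ℕ → Set Ω} (hE : ∀ k, MeasurableSet (E k))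
    (hXE : ∀ (k : ℕ) ω, (k : ℕ∞) < X ω → ω ∈ E k) : ∫⁻ ω, (X ω : ℝ≥0∞) ∂μ ≤ ∑' k, μ (E k) :=
  calc ∫⁻ ω, (X ω : ℝ≥0∞) ∂μ ≤ ∫⁻ ω, ∑' k, (E k).indicator 1 ω ∂μ :=
        lintegral_mono fun ω => ENat.toENNReal_le_tsum fun k hk => by
          simp [indicator_of_mem (hXE k ω hk)]
    _ = ∑' k, μ (E k) := by
        rw [lintegral_tsum fun k => (measurable_one.indicator (hE k)).aemeasurable]
        exact tsum_congr fun k => lintegral_indicator_one (hE k)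

section Crossings

variable {Ω : Type*} [MeasurableSpace Ω] {μ : Measure Ω} {V : ℕ → Ω → ℝ} {a : ℝ}

def crossing (V : ℕ → Ω → ℝ) (a : ℝ) (n : ℕ) : Set Ω := {ω | n * a < V (n + 1) ω}

lemma measurableSet_crossing (hV : ∀ n, Measurable (V n)) (n : ℕ) :
    MeasurableSet (crossing V a n) :=
  measurableSet_lt measurable_const (hV _)

lemma ProbabilityTheory.iIndepFun.iIndepSet_crossing (hV : ∀ n, Measurable (V n))
    (hindep : iIndepFun V μ) : iIndepSet (crossing V a) μ :=
  (hindep.precomp (add_left_injective 1)).iIndepSet_preimage (fun _ => hV _)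
    fun _ => measurableSet_Ioi

lemma measureReal_crossing_le [IsFiniteMeasure μ] (hV : ∀ n, Measurable (V n))
    (hident : ∀ n, μ.map (V n) = μ.map (V 1)) {n : ℕ} {x : ℝ} (hx : x ≤ n * a) :
    μ.real (crossing V a n) ≤ μ.real {ω | x < V 1 ω} := by
  have hlaw : μ (crossing V a n) = μ {ω | n * a < V 1 ω} :=
    (IdentDistrib.mk (hV _).aemeasurable (hV 1).aemeasurable (hident _)).measure_mem_eq
      measurableSet_Ioi
  rw [measureReal_def, measureReal_def, hlaw]
  exact ENNReal.toReal_mono (measure_ne_top _ _) (measure_mono fun ω hω => hx.trans_lt hω)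

lemma measure_iUnion_crossing_le (hV : ∀ n, Measurable (V n)) (hV0 : ∀ n ω, 0 ≤ V n ω)
    (hindep : iIndepFun V μ) (hident : ∀ n, μ.map (V n) = μ.map (V 1))
    (hint : Integrable (V 1) μ) (ha : 0 < a) (hp1 : μ.real {ω | 1 * a < V 1 ω} < 1) (j : ℕ) :
    μ (⋃ m, crossing V a (j + 1 + m)) ≤ ENNReal.ofReal
      (1 - Real.exp (-((1 - μ.real {ω | 1 * a < V 1 ω})⁻¹ * ((∫ ω, V 1 ω ∂μ) / a)))) := by
  have hA := hindep.iIndepSet_crossing (a := a) hV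
  have := hA.isProbabilityMeasure
  refine (hA.precomp (add_right_injective (j + 1))).measure_iUnion_le
    (fun m => measurableSet_crossing hV _) (inv_nonneg.2 (sub_pos.2 hp1).le)
    (fun m => Real.exp_neg_inv_one_sub_mul_le_one_sub measureReal_nonneg
      (measureReal_crossing_le hV hident ?_) hp1)
    fun s => (Finset.sum_le_sum fun m _ => measureReal_crossing_le hV hident ?_).trans
      (sum_measureReal_lt_le_integral_div (hV 1) hint (hV0 1) ha s)
  all_goals gcongr; push_cast; linarith

end Crossings

lemma ENNReal.tsum_ofReal_one_sub_pow {r : ℝ} (h0 : 0 < r) (h1 : r ≤ 1) :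
    ∑' k : ℕ, ENNReal.ofReal (1 - r) ^ k = ENNReal.ofReal r⁻¹ := by
  rw [ENNReal.tsum_geometric, ENNReal.ofReal_sub _ h0.le, ENNReal.ofReal_one,
    ENNReal.sub_sub_cancel ENNReal.one_ne_top (ENNReal.ofReal_le_one.2 h1),
    ENNReal.ofReal_inv_of_pos h0]

/-- The number `γ` of finite record times `J l` along the boundary `n (μ - ε)` is
stochastically dominated by a geometric random variable with success probability
`exp(-c E V / (μ - ε))`; in particular `E γ ≤ exp(c E V / (μ - ε))`. -/
theorem stmt4 {Ω : Type*} [MeasureSpace Ω] [IsProbabilityMeasure (ℙ : Measure Ω)]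
    (V : ℕ → Ω → ℝ) (hmeas : ∀ n, Measurable (V n))
    (hnonneg : ∀ n ω, 0 ≤ V n ω)
    (hindep : iIndepFun V ℙ)
    (hident : ∀ n, Measure.map (V n) ℙ = Measure.map (V 1) ℙ)
    (hint : Integrable (V 1) ℙ)
    (μ ε : ℝ) (h : 0 < μ - ε)
    (hp1 : (ℙ {ω | (1 : ℝ) * (μ - ε) < V 1 ω}).toReal < 1)
    (J : Ω → ℕ → ℕ∞) (hJ0 : ∀ ω, J ω 0 = 0)
    (hJ : ∀ ω l, J ω (l + 1) =
      sInf {x : ℕ∞ | ∃ n : ℕ, x = (n : ℕ∞) ∧ J ω l < (n : ℕ∞) ∧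
        (n : ℝ) * (μ - ε) < V (n + 1) ω})
    (γ : Ω → ℕ∞)
    (hγ : ∀ ω, γ ω = sInf {x : ℕ∞ | ∃ l : ℕ, x = (l : ℕ∞) ∧ 1 ≤ l ∧ J ω l = ⊤}) :
    ∃ c : ℝ, 0 < c ∧
      (∀ k : ℕ, ℙ {ω | (k : ℕ∞) < γ ω} ≤
        ENNReal.ofReal ((1 - Real.exp (-(c * ∫ ω, V 1 ω ∂ℙ) / (μ - ε))) ^ k)) ∧
      ∫⁻ ω, (γ ω : ℝ≥0∞) ∂ℙ ≤
        ENNReal.ofReal (Real.exp ((c * ∫ ω, V 1 ω ∂ℙ) / (μ - ε))) := by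
  set c := (1 - (ℙ {ω | (1 : ℝ) * (μ - ε) < V 1 ω}).toReal)⁻¹
  have hc : 0 < c := inv_pos.2 (sub_pos.2 hp1)
  set r := Real.exp (-(c * ∫ ω, V 1 ω ∂ℙ) / (μ - ε))
  have hr : r = Real.exp (-(c * ((∫ ω, V 1 ω ∂ℙ) / (μ - ε)))) := congrArg Real.exp (by ring)
  have hr1 : r ≤ 1 := by
    rw [hr, Real.exp_le_one_iff, neg_nonpos]
    exact mul_nonneg hc.le (div_nonneg (integral_nonneg (hnonneg 1)) h.le)
  have hA := hindep.iIndepSet_crossing (a := μ - ε) hmeas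
  have hAm := measurableSet_crossing (a := μ - ε) hmeas
  have hocc := hA.measure_occursAtLeast_le_pow hAm fun j => hr ▸
    measure_iUnion_crossing_le hmeas hnonneg hindep hident hint h hp1 j
  have hγA (k : ℕ) (ω : Ω) (hk : (k : ℕ∞) < γ ω) : ω ∈ occursAtLeast (crossing V (μ - ε)) k 0 :=
    mem_occursAtLeast.2 (exists_finset_of_lt_sInf (hJ0 ω) (hJ ω) (hγ ω ▸ hk))
  refine ⟨c, hc, fun k => ?_, ?_⟩
  · rw [ENNReal.ofReal_pow (sub_nonneg.2 hr1)]
    exact (measure_mono fun ω => hγA k ω).trans (hocc k 0)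
  · calc ∫⁻ ω, (γ ω : ℝ≥0∞) ∂ℙ ≤ ∑' k, ℙ (occursAtLeast (crossing V (μ - ε)) k 0) :=
          lintegral_toENNReal_le_tsum_measure
            (fun k => measurableSet_occursAtLeast fun i _ => hAm i) hγA
      _ ≤ ∑' k, ENNReal.ofReal (1 - r) ^ k := ENNReal.tsum_le_tsum (hocc · 0)
      _ = ENNReal.ofReal (Real.exp ((c * ∫ ω, V 1 ω ∂ℙ) / (μ - ε))) := by
          rw [ENNReal.tsum_ofReal_one_sub_pow (Real.exp_pos _) hr1, ← Real.exp_neg, neg_div,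
            neg_neg]
end

section
/- Suppose V is a nonnegative random variable with E[V^q] < ∞ for some q > 2, and let κ(V) be the first index K such that V_{n+1} ≤ n(μ-ε)/s for all n ≥ K, where (V_n) are i.i.d. copies of V. Then E[κ(V)] = O(s^{q/(q-1)}) as s → ∞. -/
open MeasureTheory ProbabilityTheory Set
open scoped ENNReal

/-!
Whenever `k < κ` with `k ≥ K ≥ 1`, some `n ≥ k` violates `V (n + 1) ≤ n (μ - ε) / s`; hence
`κ ≤ K + ∑_{n ≥ K} (n + 1) 1{violation at n}`. Since the `V n` are identically distributed and
`n + 1 ≤ 2 n`, Markov's inequality for the `q`-th moment bounds the expected `n`-th term by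
`E[V^q] (2 s / (μ - ε))^q (n + 1)^(1 - q)`, and comparison with `∫ x^(1 - q)` bounds the tail
from `K` by `O(s^q K^(2 - q))`. The choice `K = ⌈s^(q/(q-1))⌉` makes both terms
`O(s^(q/(q-1)))`.
-/

theorem sum_range_rpow_le_div {q x : ℝ} (hq : 2 < q) (hx : 0 < x) (N : ℕ) :
    ∑ j ∈ Finset.range N, (x + ↑(j + 1)) ^ (1 - q) ≤ x ^ (2 - q) / (q - 2) := by
  have hanti : AntitoneOn (fun y : ℝ => y ^ (1 - q)) (Icc x (x + N)) :=
    (Real.antitoneOn_rpow_Ioi_of_exponent_nonpos (by linarith)).mono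
      fun y hy => lt_of_lt_of_le hx hy.1
  have hzero : (0 : ℝ) ∉ uIcc x (x + N) := by
    rw [uIcc_of_le (by simp)]
    exact fun h => hx.not_ge h.1
  have hN : 0 ≤ (x + N) ^ (2 - q) := Real.rpow_nonneg (by positivity) _
  calc ∑ j ∈ Finset.range N, (x + ↑(j + 1)) ^ (1 - q)
      ≤ ∫ y in x..x + N, y ^ (1 - q) := hanti.sum_le_integral
    _ = (x ^ (2 - q) - (x + N) ^ (2 - q)) / (q - 2) := by
      rw [integral_rpow (Or.inr ⟨by linarith, hzero⟩), show 1 - q + 1 = 2 - q by ring,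
        ← neg_sub q 2, div_neg, ← neg_div, neg_sub]
    _ ≤ x ^ (2 - q) / (q - 2) := by gcongr; linarith

theorem tsum_ofReal_rpow_le_div {q x : ℝ} (hq : 2 < q) (hx : 0 < x) :
    ∑' j : ℕ, ENNReal.ofReal ((x + ↑(j + 1)) ^ (1 - q)) ≤
      ENNReal.ofReal (x ^ (2 - q) / (q - 2)) :=
  ENNReal.tsum_le_of_sum_range_le fun N => by
    rw [← ENNReal.ofReal_sum_of_nonneg fun j _ => Real.rpow_nonneg (by positivity) _]
    exact ENNReal.ofReal_le_ofReal (sum_range_rpow_le_div hq hx N)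

theorem rpow_mul_rpow_two_sub_le {q s x : ℝ} (hq : 2 < q) (hs : 0 < s)
    (hx : s ^ (q / (q - 1)) ≤ x) : s ^ q * x ^ (2 - q) ≤ s ^ (q / (q - 1)) := by
  have hexp : q + q / (q - 1) * (2 - q) = q / (q - 1) := by
    field_simp [show q - 1 ≠ 0 by linarith]; ring
  have hxa : x ^ (2 - q) ≤ (s ^ (q / (q - 1))) ^ (2 - q) :=
    Real.rpow_le_rpow_of_nonpos (Real.rpow_pos_of_pos hs _) hx (by linarith)
  calc s ^ q * x ^ (2 - q) ≤ s ^ q * (s ^ (q / (q - 1))) ^ (2 - q) := by gcongr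
    _ = s ^ (q / (q - 1)) := by
        rw [← Real.rpow_mul hs.le, ← Real.rpow_add hs, hexp]

theorem meas_lt_le_lintegral_rpow_div {Ω : Type*} [MeasurableSpace Ω] {μ : Measure Ω}
    {X : Ω → ℝ} (hX : AEMeasurable X μ) {q t : ℝ} (hq : 0 < q) (ht : 0 < t) :
    μ {ω | t < X ω} ≤ (∫⁻ ω, ENNReal.ofReal (X ω ^ q) ∂μ) / ENNReal.ofReal (t ^ q) := by
  refine (measure_mono fun ω (hω : t < X ω) => ?_).trans
    (meas_ge_le_lintegral_div ((hX.pow_const q).ennreal_ofReal)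
      (ENNReal.ofReal_pos.2 (Real.rpow_pos_of_pos ht q)).ne' ENNReal.ofReal_ne_top)
  exact ENNReal.ofReal_le_ofReal (Real.rpow_le_rpow ht.le hω.le hq.le)

theorem succ_mul_meas_lt_le {Ω : Type*} [MeasurableSpace Ω] {μ : Measure Ω} {X : Ω → ℝ}
    (hX : AEMeasurable X μ) {q c s : ℝ} (hq : 0 < q) (hc : 0 < c) (hs : 0 < s) {n : ℕ}
    (hn : 1 ≤ n) :
    ((n + 1 : ℕ) : ℝ≥0∞) * μ {ω | n * c / s < X ω} ≤
      (∫⁻ ω, ENNReal.ofReal (X ω ^ q) ∂μ) *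
        ENNReal.ofReal ((2 * s / c) ^ q * ((n + 1 : ℕ) : ℝ) ^ (1 - q)) := by
  set N : ℝ := ((n + 1 : ℕ) : ℝ)
  have hN : 0 < N := by positivity
  have ht : 0 < N / (2 * s / c) := by positivity
  have hmono : {ω | n * c / s < X ω} ⊆ {ω | N / (2 * s / c) < X ω} :=
    fun ω (hω : n * c / s < X ω) => by
      refine lt_of_le_of_lt ?_ hω
      have h2 : N / 2 ≤ n := by
        have : (1 : ℝ) ≤ n := by exact_mod_cast hn
        simp only [N]; push_cast; linarith
      calc N / (2 * s / c) = N / 2 * c / s := by field_simp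
        _ ≤ n * c / s := by gcongr
  have hpow : N / (N / (2 * s / c)) ^ q = (2 * s / c) ^ q * N ^ (1 - q) := by
    rw [Real.div_rpow hN.le (by positivity), Real.rpow_sub hN, Real.rpow_one]
    field_simp
  calc ((n + 1 : ℕ) : ℝ≥0∞) * μ {ω | n * c / s < X ω}
      ≤ ENNReal.ofReal N * ((∫⁻ ω, ENNReal.ofReal (X ω ^ q) ∂μ) /
          ENNReal.ofReal ((N / (2 * s / c)) ^ q)) := by
        rw [ENNReal.ofReal_natCast]
        gcongr
        exact (measure_mono hmono).trans (meas_lt_le_lintegral_rpow_div hX hq ht)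
    _ = (∫⁻ ω, ENNReal.ofReal (X ω ^ q) ∂μ) *
          ENNReal.ofReal (N / (N / (2 * s / c)) ^ q) := by
        rw [ENNReal.ofReal_div_of_pos (Real.rpow_pos_of_pos ht q), ENNReal.div_eq_inv_mul,
          ENNReal.div_eq_inv_mul]
        ring
    _ = _ := by rw [hpow]

noncomputable def stabilizationIndex (P : ℕ → Prop) : ℕ∞ :=
  sInf {x : ℕ∞ | ∃ k : ℕ, x = k ∧ 1 ≤ k ∧ ∀ n ≥ k, P n}

theorem exists_not_of_lt_stabilizationIndex {P : ℕ → Prop} {k : ℕ} (hk : 1 ≤ k)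
    (h : (k : ℕ∞) < stabilizationIndex P) : ∃ n ≥ k, ¬ P n := by
  by_contra! hP
  exact h.not_ge (sInf_le ⟨k, rfl, hk, hP⟩)

theorem stabilizationIndex_le_add_tsum (P : ℕ → Prop) {K : ℕ} (hK : 1 ≤ K) :
    (stabilizationIndex P : ℝ≥0∞) ≤
      K + ∑' j : ℕ, {n | ¬ P n}.indicator (fun n => ((n + 1 : ℕ) : ℝ≥0∞)) (K + j) := by
  set T := ∑' j : ℕ, {n | ¬ P n}.indicator (fun n => ((n + 1 : ℕ) : ℝ≥0∞)) (K + j)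
  have htail : ∀ k : ℕ, K ≤ k → (k : ℕ∞) < stabilizationIndex P →
      ((k + 1 : ℕ) : ℝ≥0∞) ≤ T := by
    intro k hKk hk
    obtain ⟨n, hkn, hn⟩ := exists_not_of_lt_stabilizationIndex (hK.trans hKk) hk
    calc ((k + 1 : ℕ) : ℝ≥0∞) ≤ ((n + 1 : ℕ) : ℝ≥0∞) := by gcongr
      _ = {n | ¬ P n}.indicator (fun n => ((n + 1 : ℕ) : ℝ≥0∞)) (K + (n - K)) := by
        rw [Nat.add_sub_cancel' (hKk.trans hkn), indicator_of_mem hn]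
      _ ≤ T := ENNReal.le_tsum (n - K)
  induction h : stabilizationIndex P using ENat.recTopCoe with
  | top =>
    refine le_of_eq (ENNReal.eq_top_of_forall_nnreal_le fun r => ?_).symm
    calc (r : ℝ≥0∞) ≤ ((max ⌈r⌉₊ K + 1 : ℕ) : ℝ≥0∞) := by
          rw [← ENNReal.coe_natCast, ENNReal.coe_le_coe]
          exact (Nat.le_ceil r).trans (by gcongr; omega)
      _ ≤ T := htail _ (le_max_right _ _) (h ▸ ENat.natCast_lt_top _)
      _ ≤ K + T := le_add_self
  | coe m =>
    rw [ENat.toENNReal_coe]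
    rcases le_or_gt m K with hmK | hKm
    · exact (Nat.cast_le.2 hmK).trans le_self_add
    · have := htail (m - 1) (by omega) (h ▸ by exact_mod_cast Nat.sub_lt (by omega) one_pos)
      rw [Nat.sub_add_cancel (by omega)] at this
      exact this.trans le_add_self

theorem lintegral_stabilizationIndex_le_add_tsum {Ω : Type*} [MeasurableSpace Ω]
    (μ : Measure Ω) [IsProbabilityMeasure μ] {V : ℕ → Ω → ℝ} (hV : ∀ n, Measurable (V n))
    (b : ℕ → ℝ) {K : ℕ} (hK : 1 ≤ K) :
    ∫⁻ ω, (stabilizationIndex (fun n => V (n + 1) ω ≤ b n) : ℝ≥0∞) ∂μ ≤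
      K + ∑' j : ℕ, ((K + j + 1 : ℕ) : ℝ≥0∞) * μ {ω | b (K + j) < V (K + j + 1) ω} := by
  have hset : ∀ j, MeasurableSet {ω | ¬ V (K + j + 1) ω ≤ b (K + j)} := fun j =>
    (measurableSet_le (hV _) measurable_const).compl
  calc _ ≤ ∫⁻ ω, K + ∑' j : ℕ, {ω | ¬ V (K + j + 1) ω ≤ b (K + j)}.indicator
          (fun _ => ((K + j + 1 : ℕ) : ℝ≥0∞)) ω ∂μ :=
        lintegral_mono fun ω => stabilizationIndex_le_add_tsum (fun n => V (n + 1) ω ≤ b n) hK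
    _ = K + ∑' j : ℕ, ((K + j + 1 : ℕ) : ℝ≥0∞) * μ {ω | ¬ V (K + j + 1) ω ≤ b (K + j)} := by
        rw [lintegral_add_left measurable_const, lintegral_const, measure_univ, mul_one,
          lintegral_tsum fun j => (measurable_const.indicator (hset j)).aemeasurable]
        simp only [lintegral_indicator_const (hset _)]
    _ = _ := by simp only [not_le]

theorem lintegral_stabilizationIndex_le_ofReal {Ω : Type*} [MeasurableSpace Ω]
    (μ : Measure Ω) [IsProbabilityMeasure μ] {V : ℕ → Ω → ℝ} (hV : ∀ n, Measurable (V n))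
    (hident : ∀ n, μ.map (V n) = μ.map (V 1)) {q c s : ℝ} (hq : 2 < q) (hc : 0 < c)
    (hs : 0 < s) (hM : ∫⁻ ω, ENNReal.ofReal (V 1 ω ^ q) ∂μ ≠ ⊤) {K : ℕ} (hK : 1 ≤ K) :
    ∫⁻ ω, (stabilizationIndex (fun n => V (n + 1) ω ≤ n * c / s) : ℝ≥0∞) ∂μ ≤
      ENNReal.ofReal (K + (∫⁻ ω, ENNReal.ofReal (V 1 ω ^ q) ∂μ).toReal * (2 * s / c) ^ q *
        ((K : ℝ) ^ (2 - q) / (q - 2))) := by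
  set M := ∫⁻ ω, ENNReal.ofReal (V 1 ω ^ q) ∂μ
  have hA : 0 ≤ (2 * s / c) ^ q := Real.rpow_nonneg (by positivity) q
  have hterm : ∀ j : ℕ, ((K + j + 1 : ℕ) : ℝ≥0∞) *
      μ {ω | ((K + j : ℕ) : ℝ) * c / s < V (K + j + 1) ω} ≤
      M * ENNReal.ofReal ((2 * s / c) ^ q * ((K : ℝ) + ↑(j + 1)) ^ (1 - q)) := fun j =>
    calc ((K + j + 1 : ℕ) : ℝ≥0∞) * μ {ω | ((K + j : ℕ) : ℝ) * c / s < V (K + j + 1) ω}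
        = ((K + j + 1 : ℕ) : ℝ≥0∞) * μ {ω | ((K + j : ℕ) : ℝ) * c / s < V 1 ω} := by
          congr 1
          exact (IdentDistrib.mk (hV _).aemeasurable (hV 1).aemeasurable
            (hident _)).measure_mem_eq measurableSet_Ioi
      _ ≤ M * ENNReal.ofReal ((2 * s / c) ^ q * ((K + j + 1 : ℕ) : ℝ) ^ (1 - q)) :=
          succ_mul_meas_lt_le (hV 1).aemeasurable (by linarith) hc hs (by omega)
      _ = _ := by push_cast; ring_nf
  calc _ ≤ K + ∑' j : ℕ, ((K + j + 1 : ℕ) : ℝ≥0∞) *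
          μ {ω | ((K + j : ℕ) : ℝ) * c / s < V (K + j + 1) ω} :=
        lintegral_stabilizationIndex_le_add_tsum μ hV (fun n => n * c / s) hK
    _ ≤ K + ∑' j : ℕ, M * ENNReal.ofReal ((2 * s / c) ^ q * ((K : ℝ) + ↑(j + 1)) ^ (1 - q)) :=
        add_le_add_right (ENNReal.tsum_le_tsum hterm) _
    _ = K + M * ENNReal.ofReal ((2 * s / c) ^ q) *
          ∑' j : ℕ, ENNReal.ofReal (((K : ℝ) + ↑(j + 1)) ^ (1 - q)) := by
        simp_rw [ENNReal.ofReal_mul hA, ENNReal.tsum_mul_left, mul_assoc]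
    _ ≤ K + M * ENNReal.ofReal ((2 * s / c) ^ q) *
          ENNReal.ofReal ((K : ℝ) ^ (2 - q) / (q - 2)) := by
        gcongr; exact tsum_ofReal_rpow_le_div hq (by positivity)
    _ = _ := by
        have hq2 : 0 < q - 2 := by linarith
        rw [← ENNReal.ofReal_toReal hM, ← ENNReal.ofReal_mul ENNReal.toReal_nonneg,
          ← ENNReal.ofReal_mul (by positivity), ← ENNReal.ofReal_natCast,
          ← ENNReal.ofReal_add (by positivity) (by positivity),
          ENNReal.toReal_ofReal ENNReal.toReal_nonneg]

theorem stmt9_general {Ω : Type*} [MeasureSpace Ω] [IsProbabilityMeasure (ℙ : Measure Ω)]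
    (V : ℕ → Ω → ℝ) (hmeas : ∀ n, Measurable (V n))
    (hident : ∀ n, Measure.map (V n) ℙ = Measure.map (V 1) ℙ)
    (q : ℝ) (hq : 2 < q) (hmom : Integrable (fun ω => V 1 ω ^ q) ℙ)
    (μ ε : ℝ) (h : 0 < μ - ε)
    (κ : ℝ → Ω → ℕ∞)
    (hκ : ∀ s ω, κ s ω = sInf {x : ℕ∞ | ∃ k : ℕ, x = (k : ℕ∞) ∧ 1 ≤ k ∧
      ∀ n ≥ k, V (n + 1) ω ≤ (n : ℝ) * (μ - ε) / s}) :
    ∃ C : ℝ, 0 < C ∧ ∃ s0 : ℝ, ∀ s : ℝ, s0 ≤ s →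
      ∫⁻ ω, (κ s ω : ℝ≥0∞) ∂ℙ ≤ ENNReal.ofReal (C * s ^ (q / (q - 1))) := by
  set M := ∫⁻ ω, ENNReal.ofReal (V 1 ω ^ q) ∂ℙ
  have hM : M ≠ ⊤ :=
    ((lintegral_ofReal_le_lintegral_enorm _).trans_lt hmom.hasFiniteIntegral).ne
  have hq2 : 0 < q - 2 := by linarith
  refine ⟨2 + M.toReal * (2 / (μ - ε)) ^ q / (q - 2), by positivity, 1, fun s hs => ?_⟩
  have hs0 : 0 < s := one_pos.trans_le hs
  set K := ⌈s ^ (q / (q - 1))⌉₊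
  have hsK : s ^ (q / (q - 1)) ≤ K := Nat.le_ceil _
  have hsa : 1 ≤ s ^ (q / (q - 1)) := Real.one_le_rpow hs (div_nonneg (by linarith) (by linarith))
  have hK2 : (K : ℝ) ≤ 2 * s ^ (q / (q - 1)) := by
    linarith [Nat.ceil_lt_add_one (zero_le_one.trans hsa)]
  have hK : 1 ≤ K := by exact_mod_cast hsa.trans hsK
  simp_rw [hκ s]
  refine (lintegral_stabilizationIndex_le_ofReal ℙ hmeas hident hq h hs0 hM hK).trans
    (ENNReal.ofReal_le_ofReal ?_)
  have hsq := rpow_mul_rpow_two_sub_le hq hs0 hsK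
  rw [mul_div_right_comm, Real.mul_rpow (by positivity) hs0.le]
  calc (K : ℝ) + M.toReal * ((2 / (μ - ε)) ^ q * s ^ q) * ((K : ℝ) ^ (2 - q) / (q - 2))
      = K + M.toReal * (2 / (μ - ε)) ^ q * (s ^ q * (K : ℝ) ^ (2 - q)) / (q - 2) := by ring
    _ ≤ 2 * s ^ (q / (q - 1)) + M.toReal * (2 / (μ - ε)) ^ q * s ^ (q / (q - 1)) / (q - 2) := by
        gcongr
    _ = _ := by ring

/-- If `E[V^q] < ∞` for some `q > 2`, then `E[κ(V)] = O(s^{q/(q-1)})` as the scale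
`s → ∞`, where `κ(V)` is the first index after which `V (n+1) ≤ n (μ - ε) / s`. -/
theorem stmt9 {Ω : Type*} [MeasureSpace Ω] [IsProbabilityMeasure (ℙ : Measure Ω)]
    (V : ℕ → Ω → ℝ) (hmeas : ∀ n, Measurable (V n))
    (hnonneg : ∀ n ω, 0 ≤ V n ω)
    (hindep : iIndepFun V ℙ)
    (hident : ∀ n, Measure.map (V n) ℙ = Measure.map (V 1) ℙ)
    (q : ℝ) (hq : 2 < q) (hmom : Integrable (fun ω => V 1 ω ^ q) ℙ)
    (μ ε : ℝ) (h : 0 < μ - ε)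
    (κ : ℝ → Ω → ℕ∞)
    (hκ : ∀ s ω, κ s ω = sInf {x : ℕ∞ | ∃ k : ℕ, x = (k : ℕ∞) ∧ 1 ≤ k ∧
      ∀ n ≥ k, V (n + 1) ω ≤ (n : ℝ) * (μ - ε) / s}) :
    ∃ C : ℝ, 0 < C ∧ ∃ s0 : ℝ, ∀ s : ℝ, s0 ≤ s →
      ∫⁻ ω, (κ s ω : ℝ≥0∞) ∂ℙ ≤ ENNReal.ofReal (C * s ^ (q / (q - 1))) :=
  stmt9_general V hmeas hident q hq hmom μ ε h κ hκ
end

section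
/- Suppose V is a nonnegative random variable with E[exp(θV)] < ∞ for some θ > 0, and let κ(V) = inf{k ≥ 1 : V_{n+1} ≤ n(μ-ε)/s for all n ≥ k} for i.i.d. copies (V_n). Then E[κ(V)] = O(s log s) as s → ∞. -/
/-!
If `κ > k ≥ k₀`, some `V (n + 1)` with `n ≥ k` exceeds `n (μ - ε) / s`. By identical distribution
and the Chernoff bound this has probability at most `M qⁿ`, where `M = E[exp (θ V₁)]`,
`q = exp (-a)` and `a = θ (μ - ε) / s`, so a union bound over `n ≥ k ≥ k₀` gives
`E[κ] ≤ k₀ + M q^k₀ / (1 - q)²`. Since `1 - q ≥ a / 2`, the tail is at most `1` as soon as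
`a k₀ ≥ log (4 M / a²)`, which holds for some `k₀ = O(s log s)`.
-/

open MeasureTheory ProbabilityTheory Real Set
open scoped ENNReal

noncomputable def eventuallyLeIndex (x t : ℕ → ℝ) : ℕ∞ :=
  sInf {m : ℕ∞ | ∃ k : ℕ, m = k ∧ 1 ≤ k ∧ ∀ n ≥ k, x n ≤ t n}

open Classical in
theorem eventuallyLeIndex_le_add_tsum (x t : ℕ → ℝ) {k₀ : ℕ} (hk₀ : 1 ≤ k₀) :
    (eventuallyLeIndex x t : ℝ≥0∞) ≤
      k₀ + ∑' j, if ∃ i, t (k₀ + j + i) < x (k₀ + j + i) then 1 else 0 := by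
  by_cases hgood : ∃ m, ¬ ∃ i, t (k₀ + m + i) < x (k₀ + m + i)
  · have hmem : ((k₀ + Nat.find hgood : ℕ) : ℕ∞) ∈
        {m : ℕ∞ | ∃ k : ℕ, m = k ∧ 1 ≤ k ∧ ∀ n ≥ k, x n ≤ t n} := by
      refine ⟨_, rfl, by omega, fun n hn => ?_⟩
      obtain ⟨i, rfl⟩ := Nat.exists_eq_add_of_le hn
      exact not_lt.1 fun h => Nat.find_spec hgood ⟨i, h⟩
    have hcount : ∑ j ∈ Finset.range (Nat.find hgood), (1 : ℝ≥0∞) ≤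
        ∑' j, if ∃ i, t (k₀ + j + i) < x (k₀ + j + i) then 1 else 0 := by
      refine le_trans (Finset.sum_le_sum fun j hj => ?_) (ENNReal.sum_le_tsum _)
      rw [if_pos (not_not.1 (Nat.find_min hgood (Finset.mem_range.1 hj)))]
    calc (eventuallyLeIndex x t : ℝ≥0∞) ≤ ((k₀ + Nat.find hgood : ℕ) : ℝ≥0∞) := by
          exact_mod_cast ENat.toENNReal_le.2 (sInf_le hmem)
      _ ≤ _ := by
          push_cast
          gcongr
          simpa using hcount
  · push Not at hgood
    simp only [hgood, if_true, ENNReal.tsum_const_eq_top_of_ne_zero one_ne_zero, add_top,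
      le_top]

theorem lintegral_eventuallyLeIndex_le {Ω : Type*} [MeasurableSpace Ω] {P : Measure Ω}
    [IsProbabilityMeasure P] {W : ℕ → Ω → ℝ} (hW : ∀ n, Measurable (W n)) (t : ℕ → ℝ)
    {k₀ : ℕ} (hk₀ : 1 ≤ k₀) :
    ∫⁻ ω, (eventuallyLeIndex (fun n => W n ω) t : ℝ≥0∞) ∂P ≤
      k₀ + ∑' j, ∑' i, P {ω | t (k₀ + j + i) < W (k₀ + j + i) ω} := by
  classical
  set bad : ℕ → Set Ω := fun j => ⋃ i, {ω | t (k₀ + j + i) < W (k₀ + j + i) ω}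
  have hbad : ∀ j, MeasurableSet (bad j) :=
    fun j => MeasurableSet.iUnion fun i => hW _ measurableSet_Ioi
  calc ∫⁻ ω, (eventuallyLeIndex (fun n => W n ω) t : ℝ≥0∞) ∂P
      ≤ ∫⁻ ω, (k₀ + ∑' j, (bad j).indicator 1 ω) ∂P := by
        refine lintegral_mono fun ω => (eventuallyLeIndex_le_add_tsum _ t hk₀).trans_eq ?_
        simp [bad, Set.indicator_apply]
    _ = k₀ + ∑' j, P (bad j) := by
        rw [lintegral_add_left measurable_const, lintegral_const, measure_univ, mul_one,
          lintegral_tsum fun j => (measurable_one.indicator (hbad j)).aemeasurable]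
        simp_rw [lintegral_indicator_one (hbad _)]
    _ ≤ _ := by gcongr with j; exact measure_iUnion_le _

theorem measure_lt_le_ofReal_exp_mul_mgf {Ω : Type*} [MeasurableSpace Ω] {P : Measure Ω}
    [IsFiniteMeasure P] {X : Ω → ℝ} {θ : ℝ} (hθ : 0 ≤ θ)
    (h_int : Integrable (fun ω => exp (θ * X ω)) P) (ν : ℝ) :
    P {ω | ν < X ω} ≤ ENNReal.ofReal (exp (-θ * ν) * mgf X P θ) :=
  calc P {ω | ν < X ω} ≤ P {ω | ν ≤ X ω} :=
        measure_mono (ofPred_subset_ofPred.2 fun _ => le_of_lt)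
    _ = ENNReal.ofReal (P.real {ω | ν ≤ X ω}) := (ofReal_measureReal).symm
    _ ≤ _ := ENNReal.ofReal_le_ofReal (measure_ge_le_exp_mul_mgf ν hθ h_int)

theorem tsum_tsum_ofReal_pow_add_add {q : ℝ} (hq0 : 0 ≤ q) (hq1 : q < 1) (k : ℕ) :
    ∑' j, ∑' i, ENNReal.ofReal (q ^ (k + j + i)) = ENNReal.ofReal (q ^ k / (1 - q) ^ 2) := by
  have hgeom : (1 - ENNReal.ofReal q)⁻¹ = ENNReal.ofReal (1 - q)⁻¹ := by
    rw [← ENNReal.ofReal_one, ← ENNReal.ofReal_sub _ hq0,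
      ENNReal.ofReal_inv_of_pos (sub_pos.2 hq1)]
  simp_rw [pow_add, ENNReal.ofReal_mul (by positivity : (0 : ℝ) ≤ q ^ k * q ^ _),
    ENNReal.ofReal_mul (pow_nonneg hq0 _), ENNReal.ofReal_pow hq0,
    ENNReal.tsum_mul_left, ENNReal.tsum_geometric]
  rw [ENNReal.tsum_mul_right, ENNReal.tsum_mul_left, ENNReal.tsum_geometric, hgeom,
    ← ENNReal.ofReal_pow hq0, ← ENNReal.ofReal_mul (by positivity),
    ← ENNReal.ofReal_mul (by positivity)]
  congr 1
  field_simp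

theorem half_le_one_sub_exp_neg {a : ℝ} (ha0 : 0 ≤ a) (ha1 : a ≤ 1) :
    a / 2 ≤ 1 - exp (-a) := by
  have hprod : exp (-a) * exp a = 1 := by rw [← exp_add]; simp
  nlinarith [add_one_le_exp a, exp_pos (-a)]

theorem exp_neg_pow_div_sq_mul_le_one {a M : ℝ} (ha0 : 0 < a) (ha1 : a ≤ 1) (hM : 0 < M)
    {k : ℕ} (hk : log (4 * M / a ^ 2) ≤ a * k) :
    exp (-a) ^ k / (1 - exp (-a)) ^ 2 * M ≤ 1 := by
  have hpow : exp (-a) ^ k ≤ a ^ 2 / (4 * M) := by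
    rw [← exp_nat_mul, ← inv_div, ← exp_log (by positivity : 0 < 4 * M / a ^ 2),
      ← exp_neg]
    gcongr
    linarith
  have hsq : (a / 2) ^ 2 ≤ (1 - exp (-a)) ^ 2 := by
    gcongr
    exact half_le_one_sub_exp_neg ha0.le ha1
  calc exp (-a) ^ k / (1 - exp (-a)) ^ 2 * M ≤ a ^ 2 / (4 * M) / (a / 2) ^ 2 * M := by
        gcongr
    _ = 1 := by field_simp; ring

theorem tsum_tsum_le_one_of_le_exp_neg_pow {p : ℕ → ℝ≥0∞} {a M : ℝ} (ha0 : 0 < a) (ha1 : a ≤ 1)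
    (hM : 0 < M) {k : ℕ} (hk : log (4 * M / a ^ 2) ≤ a * k)
    (hp : ∀ n, p n ≤ ENNReal.ofReal (exp (-a) ^ n * M)) :
    ∑' j, ∑' i, p (k + j + i) ≤ 1 :=
  calc ∑' j, ∑' i, p (k + j + i) ≤ ∑' j, ∑' i, ENNReal.ofReal (exp (-a) ^ (k + j + i) * M) := by
        gcongr with j i
        exact hp _
    _ = ENNReal.ofReal (exp (-a) ^ k / (1 - exp (-a)) ^ 2 * M) := by
        simp_rw [ENNReal.ofReal_mul' hM.le, ENNReal.tsum_mul_right,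
          tsum_tsum_ofReal_pow_add_add (exp_pos _).le (exp_lt_one_iff.2 (neg_lt_zero.2 ha0))]
    _ ≤ 1 := ENNReal.ofReal_le_one.2 (exp_neg_pow_div_sq_mul_le_one ha0 ha1 hM hk)

theorem exists_nat_log_le_mul_and_add_one_le {c M s : ℝ} (hc : 0 < c) (hM : 0 < M)
    (hs : exp 1 ≤ s) :
    ∃ k : ℕ, 1 ≤ k ∧ log (4 * M / (c / s) ^ 2) ≤ c / s * k ∧
      (k : ℝ) + 1 ≤ ((|log (4 * M / c ^ 2)| + 2) / c + 3) * s * log s := by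
  have hs0 : 0 < s := (exp_pos 1).trans_le hs
  have hlog : 1 ≤ log s := by rwa [le_log_iff_exp_le hs0]
  set B := log (4 * M / c ^ 2)
  set y := s / c * |B| + s / c * 2 * log s
  have hy : 0 ≤ y := by positivity
  refine ⟨⌈y⌉₊ + 1, Nat.le_add_left 1 _, ?_, ?_⟩
  · have hsplit : 4 * M / (c / s) ^ 2 = 4 * M / c ^ 2 * s ^ 2 := by field_simp
    calc log (4 * M / (c / s) ^ 2) = c / s * (s / c * B + s / c * 2 * log s) := by
          rw [hsplit, log_mul (by positivity) (by positivity), log_pow]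
          field_simp
          push_cast
          ring
      _ ≤ c / s * (s / c * |B| + s / c * 2 * log s) := by
          gcongr
          exact le_abs_self B
      _ ≤ c / s * (⌈y⌉₊ + 1 : ℕ) := by
          gcongr
          exact (Nat.le_ceil y).trans (by simp)
  · have hB : s / c * |B| ≤ s / c * |B| * log s := le_mul_of_one_le_right (by positivity) hlog
    have hs1 : 1 ≤ s := (one_le_exp zero_le_one).trans hs
    have h3 : 3 ≤ 3 * s * log s := by nlinarith
    have hC : ((|B| + 2) / c + 3) * s * log s =
        s / c * |B| * log s + s / c * 2 * log s + 3 * s * log s := by ring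
    push_cast
    linarith [Nat.ceil_lt_add_one hy]

theorem stmt10_general {Ω : Type*} [MeasureSpace Ω] [IsProbabilityMeasure (ℙ : Measure Ω)]
    (V : ℕ → Ω → ℝ) (hmeas : ∀ n, Measurable (V n))
    (hident : ∀ n, Measure.map (V n) ℙ = Measure.map (V 1) ℙ)
    (θ : ℝ) (hθ : 0 < θ) (hmgf : Integrable (fun ω => Real.exp (θ * V 1 ω)) ℙ)
    (μ ε : ℝ) (h : 0 < μ - ε)
    (κ : ℝ → Ω → ℕ∞)
    (hκ : ∀ s ω, κ s ω = sInf {x : ℕ∞ | ∃ k : ℕ, x = (k : ℕ∞) ∧ 1 ≤ k ∧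
      ∀ n ≥ k, V (n + 1) ω ≤ (n : ℝ) * (μ - ε) / s}) :
    ∃ C : ℝ, 0 < C ∧ ∃ s0 : ℝ, ∀ s : ℝ, s0 ≤ s →
      ∫⁻ ω, (κ s ω : ℝ≥0∞) ∂ℙ ≤ ENNReal.ofReal (C * s * Real.log s) := by
  have hc : 0 < θ * (μ - ε) := mul_pos hθ h
  have hM : 0 < mgf (V 1) ℙ θ := mgf_pos hmgf
  refine ⟨(|log (4 * mgf (V 1) ℙ θ / (θ * (μ - ε)) ^ 2)| + 2) / (θ * (μ - ε)) + 3,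
    by positivity, max (exp 1) (θ * (μ - ε)), fun s hs => ?_⟩
  obtain ⟨hse, hsc⟩ := max_le_iff.1 hs
  have hs0 : 0 < s := (exp_pos 1).trans_le hse
  obtain ⟨k₀, hk₀, hlog, hk₀s⟩ := exists_nat_log_le_mul_and_add_one_le hc hM hse
  have htail : ∀ n : ℕ, ℙ {ω | (n : ℝ) * (μ - ε) / s < V (n + 1) ω} ≤
      ENNReal.ofReal (exp (-(θ * (μ - ε) / s)) ^ n * mgf (V 1) ℙ θ) := by
    intro n
    have hsame : IdentDistrib (V (n + 1)) (V 1) ℙ ℙ :=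
      ⟨(hmeas _).aemeasurable, (hmeas 1).aemeasurable, hident _⟩
    refine (hsame.measure_mem_eq measurableSet_Ioi).trans_le
      ((measure_lt_le_ofReal_exp_mul_mgf hθ.le hmgf _).trans_eq ?_)
    rw [← exp_nat_mul]
    congr 3
    field_simp
  calc ∫⁻ ω, (κ s ω : ℝ≥0∞) ∂ℙ
      ≤ k₀ + ∑' j, ∑' i, ℙ {ω | ((k₀ + j + i : ℕ) : ℝ) * (μ - ε) / s < V (k₀ + j + i + 1) ω} := by
        simp_rw [hκ]
        exact lintegral_eventuallyLeIndex_le (W := fun n ω => V (n + 1) ω) (fun n => hmeas _) _ hk₀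
    _ ≤ k₀ + 1 := by
        gcongr
        exact tsum_tsum_le_one_of_le_exp_neg_pow (div_pos hc hs0) ((div_le_one hs0).2 hsc) hM hlog
          htail
    _ ≤ _ := by
        rw [← ENNReal.ofReal_natCast, ← ENNReal.ofReal_one,
          ← ENNReal.ofReal_add k₀.cast_nonneg zero_le_one]
        exact ENNReal.ofReal_le_ofReal hk₀s

/-- If `E[exp(θ V)] < ∞` for some `θ > 0`, then `E[κ(V)] = O(s log s)` as `s → ∞`. -/
theorem stmt10 {Ω : Type*} [MeasureSpace Ω] [IsProbabilityMeasure (ℙ : Measure Ω)]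
    (V : ℕ → Ω → ℝ) (hmeas : ∀ n, Measurable (V n))
    (hnonneg : ∀ n ω, 0 ≤ V n ω)
    (hindep : iIndepFun V ℙ)
    (hident : ∀ n, Measure.map (V n) ℙ = Measure.map (V 1) ℙ)
    (θ : ℝ) (hθ : 0 < θ) (hmgf : Integrable (fun ω => Real.exp (θ * V 1 ω)) ℙ)
    (μ ε : ℝ) (h : 0 < μ - ε)
    (κ : ℝ → Ω → ℕ∞)
    (hκ : ∀ s ω, κ s ω = sInf {x : ℕ∞ | ∃ k : ℕ, x = (k : ℕ∞) ∧ 1 ≤ k ∧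
      ∀ n ≥ k, V (n + 1) ω ≤ (n : ℝ) * (μ - ε) / s}) :
    ∃ C : ℝ, 0 < C ∧ ∃ s0 : ℝ, ∀ s : ℝ, s0 ≤ s →
      ∫⁻ ω, (κ s ω : ℝ≥0∞) ∂ℙ ≤ ENNReal.ofReal (C * s * Real.log s) :=
  stmt10_general V hmeas hident θ hθ hmgf μ ε h κ hκ
end
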